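/- Let Γ be a maximally Log-consistent set. Then the set Γ[I] is Log-consistent. -/
import Mathlib


/-- Formulas of classical propositional logic `L_CPL` over a countable set
of atomic propositions (represented by natural numbers). -/
inductive CPL : Type
  | top : CPL
  | atom : ℕ → CPL
  | neg : CPL → CPL
  | or : CPL → CPL → CPL
  | and : CPL → CPL → CPL
  deriving DecidableEq
/-- `Var(φ)`: the (finite) set of atomic propositions occurring in `φ`. -/
def CPL.var : CPL → Finset ℕ
  | .top => ∅
  | .atom p => {p}
  | .neg φ => φ.var
  | .or φ ψ => φ.var ∪ ψ.var
  | .and φ ψ => φ.var ∪ ψ.var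

/-- `p̄ := p ∨ ¬p`. -/
def pbar (p : ℕ) : CPL := .or (.atom p) (.neg (.atom p))

/-- Conjunction of a list of `L_CPL` formulas (empty conjunction is `⊤`). -/
def conjList : List CPL → CPL
  | [] => .top
  | [α] => α
  | α :: β :: rest => .and α (conjList (β :: rest))

/-- `φ̄ := ⋀_{p ∈ Var(φ)} (p ∨ ¬p)`, with the conjuncts taken in the fixed
(increasing) enumeration order of the atomic propositions. -/
def CPL.bar (φ : CPL) : CPL := conjList ((φ.var.sort (· ≤ ·)).map pbar)
/-- Formulas of the language `L_Int`, extending `L_CPL` (embedded via `of`) by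
negation, disjunction, conjunction, the global modality `⊞` (`box`) and the
intention modality `I` (`int`), which applies only to `L_CPL` formulas. -/
inductive Form : Type
  | of : CPL → Form
  | neg : Form → Form
  | or : Form → Form → Form
  | and : Form → Form → Form
  | box : Form → Form
  | int : CPL → Form
  deriving DecidableEq
/-- Material implication in `L_Int`: `φ → ψ := ¬φ ∨ ψ`. -/
def Form.imp (φ ψ : Form) : Form := .or (.neg φ) ψ

/-- Material biconditional in `L_Int`: `φ ↔ ψ := (φ → ψ) ∧ (ψ → φ)`. -/
def Form.iff (φ ψ : Form) : Form := .and (φ.imp ψ) (ψ.imp φ)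

/-- `⊥ := ¬⊤`. -/
def Form.bot : Form := .neg (.of .top)

/-- Boolean evaluation of `L_CPL` formulas under a valuation of the atoms. -/
def CPL.eval (v : ℕ → Bool) : CPL → Bool
  | .top => true
  | .atom p => v p
  | .neg φ => !φ.eval v
  | .or φ ψ => φ.eval v || ψ.eval v
  | .and φ ψ => φ.eval v && ψ.eval v

/-- Boolean evaluation of `L_Int` formulas, treating `⊞`- and `I`-formulas as
atoms (evaluated by `u`). -/
def Form.eval (v : ℕ → Bool) (u : Form → Bool) : Form → Bool
  | .of α => α.eval v
  | .neg φ => !φ.eval v u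
  | .or φ ψ => φ.eval v u || ψ.eval v u
  | .and φ ψ => φ.eval v u && ψ.eval v u
  | .box φ => u (.box φ)
  | .int α => u (.int α)

/-- Classical propositional tautologies of `L_Int` (with modal formulas
treated as atoms). -/
def Taut (φ : Form) : Prop := ∀ v u, φ.eval v u = true

/-- Derivability in the proof system `Log`: classical tautologies and Modus
Ponens; `S5` axioms and necessitation for `⊞`; and the intention axioms
Ax1: `I⊤`; Ax2: `Iφ → Iφ̄`; Ax3: `Iφ → ¬I¬φ`; Ax4: `(Iφ ∧ Iψ) ↔ I(φ ∧ ψ)`;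
Ax5: `⊞(ψ → φ) → ((Iψ ∧ Iφ̄) → Iφ)`. -/
inductive Deriv : Set Form → Form → Prop
  | prem {Γ : Set Form} {φ : Form} : φ ∈ Γ → Deriv Γ φ
  | taut {Γ : Set Form} {φ : Form} : Taut φ → Deriv Γ φ
  | mp {Γ : Set Form} {φ ψ : Form} :
      Deriv Γ (φ.imp ψ) → Deriv Γ φ → Deriv Γ ψ
  | boxK {Γ : Set Form} (φ ψ : Form) :
      Deriv Γ ((Form.box (φ.imp ψ)).imp ((Form.box φ).imp (Form.box ψ)))
  | boxT {Γ : Set Form} (φ : Form) : Deriv Γ ((Form.box φ).imp φ)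
  | box5 {Γ : Set Form} (φ : Form) :
      Deriv Γ ((Form.neg (Form.box φ)).imp (Form.box (Form.neg (Form.box φ))))
  | nec {Γ : Set Form} {φ : Form} : Deriv ∅ φ → Deriv Γ (Form.box φ)
  | ax1 {Γ : Set Form} : Deriv Γ (Form.int .top)
  | ax2 {Γ : Set Form} (α : CPL) :
      Deriv Γ ((Form.int α).imp (Form.int α.bar))
  | ax3 {Γ : Set Form} (α : CPL) :
      Deriv Γ ((Form.int α).imp (Form.neg (Form.int (CPL.neg α))))
  | ax4 {Γ : Set Form} (α β : CPL) :
      Deriv Γ ((Form.and (.int α) (.int β)).iff (Form.int (.and α β)))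
  | ax5 {Γ : Set Form} (α β : CPL) :
      Deriv Γ ((Form.box ((Form.of β).imp (Form.of α))).imp
        ((Form.and (.int β) (.int α.bar)).imp (Form.int α)))

/-- A set of formulas is `Log`-consistent if `⊥` is not derivable from it. -/
def LogConsistent (Γ : Set Form) : Prop := ¬ Deriv Γ Form.bot

/-- A maximally `Log`-consistent set: consistent with no proper consistent
extension. -/
def MCS (Γ : Set Form) : Prop :=
  LogConsistent Γ ∧ ∀ Δ, LogConsistent Δ → Γ ⊆ Δ → Δ = Γ
/-- `Γ[⊞] = {φ : ⊞φ ∈ Γ}`. -/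
def boxSet (Γ : Set Form) : Set Form := {φ | Form.box φ ∈ Γ}

/-- `Γ[I] = {φ ∈ L_Int : Iψ ∧ ⊞(ψ → φ) ∈ Γ for some ψ ∈ L_CPL}`. -/
def intSet (Γ : Set Form) : Set Form :=
  {φ | ∃ ψ : CPL, Form.and (Form.int ψ) (Form.box ((Form.of ψ).imp φ)) ∈ Γ}

section Aux

lemma taut_K (a b : Form) : Taut (a.imp (b.imp a)) := by
  intro v u
  simp only [Form.imp, Form.eval]
  cases a.eval v u <;> cases b.eval v u <;> rfl

lemma taut_S (a b c : Form) :
    Taut ((a.imp (b.imp c)).imp ((a.imp b).imp (a.imp c))) := by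
  intro v u
  simp only [Form.imp, Form.eval]
  cases a.eval v u <;> cases b.eval v u <;> cases c.eval v u <;> rfl

lemma taut_andl (a b : Form) : Taut ((Form.and a b).imp a) := by
  intro v u
  simp only [Form.imp, Form.eval]
  cases a.eval v u <;> cases b.eval v u <;> rfl

lemma taut_andr (a b : Form) : Taut ((Form.and a b).imp b) := by
  intro v u
  simp only [Form.imp, Form.eval]
  cases a.eval v u <;> cases b.eval v u <;> rfl

lemma taut_pair (a b : Form) : Taut (a.imp (b.imp (Form.and a b))) := by
  intro v u
  simp only [Form.imp, Form.eval]
  cases a.eval v u <;> cases b.eval v u <;> rfl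

lemma taut_str_l (β γ : CPL) (φ : Form) :
    Taut (((Form.of β).imp φ).imp ((Form.of (CPL.and β γ)).imp φ)) := by
  intro v u
  simp only [Form.imp, Form.eval, CPL.eval]
  cases β.eval v <;> cases γ.eval v <;> cases φ.eval v u <;> rfl

lemma taut_str_r (β γ : CPL) (φ : Form) :
    Taut (((Form.of γ).imp φ).imp ((Form.of (CPL.and β γ)).imp φ)) := by
  intro v u
  simp only [Form.imp, Form.eval, CPL.eval]
  cases β.eval v <;> cases γ.eval v <;> cases φ.eval v u <;> rfl

lemma taut_negI (ψ : CPL) :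
    Taut (((Form.of ψ).imp Form.bot).imp ((Form.of ψ).imp (Form.of (CPL.neg ψ)))) := by
  intro v u
  simp only [Form.imp, Form.eval, Form.bot, CPL.eval]
  cases ψ.eval v <;> rfl

lemma taut_contra (a : Form) : Taut (a.imp ((Form.neg a).imp Form.bot)) := by
  intro v u
  simp only [Form.imp, Form.eval, Form.bot, CPL.eval]
  cases a.eval v u <;> rfl

lemma box_mp {Γ : Set Form} {a b : Form}
    (h1 : Deriv Γ (Form.box (a.imp b))) (h2 : Deriv Γ (Form.box a)) :
    Deriv Γ (Form.box b) :=
  Deriv.mp (Deriv.mp (Deriv.boxK a b) h1) h2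

lemma box_taut {Γ : Set Form} {a : Form} (h : Taut a) : Deriv Γ (Form.box a) :=
  Deriv.nec (Deriv.taut h)

lemma box_imp_of_empty {Γ : Set Form} {ψ : CPL} {χ : Form} (h : Deriv ∅ χ) :
    Deriv Γ (Form.box ((Form.of ψ).imp χ)) :=
  box_mp (box_taut (taut_K χ (Form.of ψ))) (Deriv.nec h)

lemma deriv_pair {Γ : Set Form} {a b : Form} (h1 : Deriv Γ a) (h2 : Deriv Γ b) :
    Deriv Γ (Form.and a b) :=
  Deriv.mp (Deriv.mp (Deriv.taut (taut_pair a b)) h1) h2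

lemma deriv_mono : ∀ {Γ : Set Form} {φ : Form}, Deriv Γ φ →
    ∀ {Δ : Set Form}, Γ ⊆ Δ → Deriv Δ φ := by
  intro Γ φ h
  induction h with
  | prem h => exact fun hsub => Deriv.prem (hsub h)
  | taut h => exact fun _ => Deriv.taut h
  | mp _ _ ih1 ih2 => exact fun hsub => Deriv.mp (ih1 hsub) (ih2 hsub)
  | boxK a b => exact fun _ => Deriv.boxK a b
  | boxT a => exact fun _ => Deriv.boxT a
  | box5 a => exact fun _ => Deriv.box5 a
  | nec h ih => exact fun _ => Deriv.nec h
  | ax1 => exact fun _ => Deriv.ax1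
  | ax2 α => exact fun _ => Deriv.ax2 α
  | ax3 α => exact fun _ => Deriv.ax3 α
  | ax4 α β => exact fun _ => Deriv.ax4 α β
  | ax5 α β => exact fun _ => Deriv.ax5 α β

lemma deriv_cut : ∀ {Δ : Set Form} {φ : Form}, Deriv Δ φ →
    ∀ {Γ : Set Form}, (∀ χ ∈ Δ, Deriv Γ χ) → Deriv Γ φ := by
  intro Δ φ h
  induction h with
  | prem h => exact fun hH => hH _ h
  | taut h => exact fun _ => Deriv.taut h
  | mp _ _ ih1 ih2 => exact fun hH => Deriv.mp (ih1 hH) (ih2 hH)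
  | boxK a b => exact fun _ => Deriv.boxK a b
  | boxT a => exact fun _ => Deriv.boxT a
  | box5 a => exact fun _ => Deriv.box5 a
  | nec h ih => exact fun _ => Deriv.nec h
  | ax1 => exact fun _ => Deriv.ax1
  | ax2 α => exact fun _ => Deriv.ax2 α
  | ax3 α => exact fun _ => Deriv.ax3 α
  | ax4 α β => exact fun _ => Deriv.ax4 α β
  | ax5 α β => exact fun _ => Deriv.ax5 α β

lemma deriv_finite : ∀ {Γ : Set Form} {φ : Form}, Deriv Γ φ →
    ∃ L : List Form, (∀ χ ∈ L, χ ∈ Γ) ∧ Deriv {χ | χ ∈ L} φ := by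
  intro Γ φ h
  induction h with
  | prem h => exact ⟨[_], by simpa using h, Deriv.prem (by simp)⟩
  | taut h => exact ⟨[], by simp, Deriv.taut h⟩
  | mp _ _ ih1 ih2 =>
    obtain ⟨L1, h1, d1⟩ := ih1
    obtain ⟨L2, h2, d2⟩ := ih2
    refine ⟨L1 ++ L2, ?_, Deriv.mp (deriv_mono d1 ?_) (deriv_mono d2 ?_)⟩
    · intro χ hχ
      rcases List.mem_append.mp hχ with h | h
      exacts [h1 χ h, h2 χ h]
    · intro χ hχ; exact List.mem_append.mpr (Or.inl hχ)
    · intro χ hχ; exact List.mem_append.mpr (Or.inr hχ)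
  | boxK a b => exact ⟨[], by simp, Deriv.boxK a b⟩
  | boxT a => exact ⟨[], by simp, Deriv.boxT a⟩
  | box5 a => exact ⟨[], by simp, Deriv.box5 a⟩
  | nec h ih => exact ⟨[], by simp, Deriv.nec h⟩
  | ax1 => exact ⟨[], by simp, Deriv.ax1⟩
  | ax2 α => exact ⟨[], by simp, Deriv.ax2 α⟩
  | ax3 α => exact ⟨[], by simp, Deriv.ax3 α⟩
  | ax4 α β => exact ⟨[], by simp, Deriv.ax4 α β⟩
  | ax5 α β => exact ⟨[], by simp, Deriv.ax5 α β⟩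

/-- Boxed cut: if `φ` is derivable from `Δ` and every member of `Δ` is
"boxed-implied by `ψ`" over `Γ`, then so is `φ`. -/
lemma boxed_cut : ∀ {Δ : Set Form} {φ : Form}, Deriv Δ φ →
    ∀ {Γ : Set Form} (ψ : CPL),
      (∀ χ ∈ Δ, Deriv Γ (Form.box ((Form.of ψ).imp χ))) →
      Deriv Γ (Form.box ((Form.of ψ).imp φ)) := by
  intro Δ φ h
  induction h with
  | prem h => exact fun ψ hH => hH _ h
  | taut h =>
    refine fun ψ _ => box_taut ?_
    intro v u
    simp only [Form.imp, Form.eval, h v u]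
    simp
  | @mp _ a b _ _ ih1 ih2 =>
    intro Γ' ψ hH
    exact box_mp (box_mp (box_taut (taut_S (Form.of ψ) a b)) (ih1 ψ hH)) (ih2 ψ hH)
  | boxK a b => exact fun ψ _ => box_imp_of_empty (Deriv.boxK a b)
  | boxT a => exact fun ψ _ => box_imp_of_empty (Deriv.boxT a)
  | box5 a => exact fun ψ _ => box_imp_of_empty (Deriv.box5 a)
  | nec h ih => exact fun ψ _ => box_imp_of_empty (Deriv.nec h)
  | ax1 => exact fun ψ _ => box_imp_of_empty Deriv.ax1
  | ax2 α => exact fun ψ _ => box_imp_of_empty (Deriv.ax2 α)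
  | ax3 α => exact fun ψ _ => box_imp_of_empty (Deriv.ax3 α)
  | ax4 α β => exact fun ψ _ => box_imp_of_empty (Deriv.ax4 α β)
  | ax5 α β => exact fun ψ _ => box_imp_of_empty (Deriv.ax5 α β)

lemma mcs_closed {Γ : Set Form} (hΓ : MCS Γ) {φ : Form} (h : Deriv Γ φ) : φ ∈ Γ := by
  have hcons : LogConsistent (insert φ Γ) := by
    intro hbot
    refine hΓ.1 (deriv_cut hbot ?_)
    intro χ hχ
    rcases hχ with rfl | hχ
    exacts [h, Deriv.prem hχ]
  have := hΓ.2 _ hcons (Set.subset_insert _ _)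
  rw [← this]
  exact Set.mem_insert _ _

lemma exists_uniform {Γ : Set Form} (hΓ : MCS Γ) :
    ∀ L : List Form, (∀ φ ∈ L, φ ∈ intSet Γ) →
      ∃ ψ : CPL, Form.int ψ ∈ Γ ∧
        ∀ φ ∈ L, Deriv Γ (Form.box ((Form.of ψ).imp φ)) := by
  intro L
  induction L with
  | nil => exact fun _ => ⟨.top, mcs_closed hΓ Deriv.ax1, by simp⟩
  | cons a L ih =>
    intro hL
    obtain ⟨ψa, ha⟩ := hL a (by simp)
    obtain ⟨ψ, hψI, hψ⟩ := ih (fun φ hφ => hL φ (List.mem_cons_of_mem _ hφ))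
    have hIa : Deriv Γ (Form.int ψa) :=
      Deriv.mp (Deriv.taut (taut_andl _ _)) (Deriv.prem ha)
    have hba : Deriv Γ (Form.box ((Form.of ψa).imp a)) :=
      Deriv.mp (Deriv.taut (taut_andr _ _)) (Deriv.prem ha)
    refine ⟨.and ψa ψ, ?_, ?_⟩
    · have fwd : Deriv Γ ((Form.and (.int ψa) (.int ψ)).imp (Form.int (.and ψa ψ))) :=
        Deriv.mp (Deriv.taut (taut_andl _ _)) (Deriv.ax4 ψa ψ)
      exact mcs_closed hΓ (Deriv.mp fwd (deriv_pair hIa (Deriv.prem hψI)))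
    · intro φ hφ
      rcases List.mem_cons.mp hφ with rfl | hφ
      · exact box_mp (box_taut (taut_str_l ψa ψ φ)) hba
      · exact box_mp (box_taut (taut_str_r ψa ψ φ)) (hψ φ hφ)

end Aux

/-- For every maximally `Log`-consistent set `Γ`, the set
`Γ[I]` is `Log`-consistent. -/
theorem intSet_consistent (Γ : Set Form) (hΓ : MCS Γ) :
    LogConsistent (intSet Γ) := by
  intro hbot
  obtain ⟨L, hLmem, hLder⟩ := deriv_finite hbot
  obtain ⟨ψ, hψI, hψbox⟩ := exists_uniform hΓ L hLmem
  have hbotbox : Deriv Γ (Form.box ((Form.of ψ).imp Form.bot)) :=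
    boxed_cut hLder ψ (fun χ hχ => hψbox χ hχ)
  have h1 : Deriv Γ (Form.box ((Form.of ψ).imp (Form.of (CPL.neg ψ)))) :=
    box_mp (box_taut (taut_negI ψ)) hbotbox
  have h2 : Deriv Γ (Form.int (CPL.neg ψ).bar) := by
    have hb : (CPL.neg ψ).bar = ψ.bar := rfl
    rw [hb]
    exact Deriv.mp (Deriv.ax2 ψ) (Deriv.prem hψI)
  have h3 : Deriv Γ (Form.int (CPL.neg ψ)) :=
    Deriv.mp (Deriv.mp (Deriv.ax5 (CPL.neg ψ) ψ) h1)
      (deriv_pair (Deriv.prem hψI) h2)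
  have h4 : Deriv Γ (Form.neg (Form.int (CPL.neg ψ))) :=
    Deriv.mp (Deriv.ax3 ψ) (Deriv.prem hψI)
  exact hΓ.1 (Deriv.mp (Deriv.mp (Deriv.taut (taut_contra _)) h3) h4)
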